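/- arXiv:2301.11556 — 7 statements merged into one kernel-verified Lean document; each statement's English description precedes it below -/
import Mathlib

section
/- Let n ≥ 1 and let S_1, …, S_{n+1} be exchangeable real-valued random variables that are almost surely pairwise distinct, i.e., P(S_i = S_j) = 0 for all i ≠ j. Define the conformal p-value û = (1 + #{i ∈ {1, …, n} : S_i ≤ S_{n+1}}) / (n+1). Then û is uniformly distributed on the grid {1/(n+1), 2/(n+1), …, 1}: for every k ∈ {1, …, n+1}, P(û = k/(n+1)) = 1/(n+1). -/
open MeasureTheory Finset
open scoped ENNReal

/-! The p-value is `R / (n + 1)`, where `R` is the rank of the test score among all `n + 1`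
scores. Almost surely the scores are distinct, and then the ranks are a permutation of
`1, …, n + 1`: exactly one index has rank `k`, so `∑ⱼ P(Rⱼ = k) = 1`. Exchangeability, applied
to transpositions, makes all terms of this sum equal, hence each is `1 / (n + 1)`. -/

namespace Conformal

section Order

variable {ι α : Type*} [Fintype ι] [LinearOrder α]

def rank (x : ι → α) (j : ι) : ℕ := #{i | x i ≤ x j}

theorem rank_comp_perm (x : ι → α) (σ : Equiv.Perm ι) (j : ι) :
    rank (fun i ↦ x (σ i)) j = rank x (σ j) := by
  unfold rank
  rw [← card_map σ.toEmbedding, map_filter]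
  simp

theorem rank_lt_rank (x : ι → α) {a b : ι} (h : x a < x b) : rank x a < rank x b := by
  refine card_lt_card ⟨fun i hi ↦ ?_, fun hsub ↦ ?_⟩
  · simp only [mem_filter, mem_univ, true_and] at hi ⊢; exact hi.trans h.le
  · simpa using (mem_filter.1 (hsub (mem_filter.2 ⟨mem_univ b, le_rfl⟩))).2.trans_lt h

theorem rank_injective {x : ι → α} (hx : Function.Injective x) : Function.Injective (rank x) := by
  intro a b hab
  by_contra hne
  rcases (hx.ne hne).lt_or_gt with h | h
  · exact (rank_lt_rank x h).ne hab
  · exact (rank_lt_rank x h).ne' hab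

theorem rank_mem_Icc (x : ι → α) (j : ι) : rank x j ∈ Icc 1 (Fintype.card ι) :=
  mem_Icc.2 ⟨card_pos.2 ⟨j, by simp⟩, card_filter_le _ _⟩

theorem card_rank_eq {x : ι → α} (hx : Function.Injective x) {k : ℕ}
    (hk : k ∈ Icc 1 (Fintype.card ι)) : #{j | rank x j = k} = 1 := by
  have himage : univ.image (rank x) = Icc 1 (Fintype.card ι) :=
    eq_of_subset_of_card_le (image_subset_iff.2 fun j _ ↦ rank_mem_Icc x j)
      (by simp [card_image_of_injective _ (rank_injective hx)])
  obtain ⟨j, -, rfl⟩ := mem_image.1 (himage ▸ hk)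
  exact card_eq_one.2 ⟨j, by ext; simp [(rank_injective hx).eq_iff]⟩

end Order

theorem rank_last {n : ℕ} {α : Type*} [LinearOrder α] (x : Fin (n + 1) → α) :
    rank x (Fin.last n) = #{i : Fin n | x i.castSucc ≤ x (Fin.last n)} + 1 := by
  rw [rank, card_filter, card_filter, Fin.sum_univ_castSucc]
  simp

section Probability

variable {ι Ω : Type*} [Fintype ι] [MeasurableSpace Ω] {P : Measure Ω} {S : ι → Ω → ℝ}

theorem measurable_rank (j : ι) : Measurable fun x : ι → ℝ ↦ rank x j := by
  simp only [rank, card_filter]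
  exact Finset.measurable_sum _ fun i _ ↦
    Measurable.ite (measurableSet_le (measurable_pi_apply i) (measurable_pi_apply j))
      measurable_const measurable_const

theorem ae_injective_of_measure_eq_zero
    (hdist : ∀ i j, i ≠ j → P {ω | S i ω = S j ω} = 0) :
    ∀ᵐ ω ∂P, Function.Injective fun i ↦ S i ω := by
  have hne : ∀ᵐ ω ∂P, ∀ i j, i ≠ j → S i ω ≠ S j ω := by
    refine ae_all_iff.2 fun i ↦ ae_all_iff.2 fun j ↦ ?_
    by_cases hij : i = j
    · exact .of_forall fun _ h ↦ (h hij).elim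
    · filter_upwards [measure_eq_zero_iff_ae_notMem.1 (hdist i j hij)] with ω hω _ using hω
  filter_upwards [hne] with ω hω using Function.injective_iff_pairwise_ne.2 hω

theorem sum_measure_rank_eq_one [IsProbabilityMeasure P] (hS : ∀ i, Measurable (S i))
    (hdist : ∀ i j, i ≠ j → P {ω | S i ω = S j ω} = 0) {k : ℕ}
    (hk : k ∈ Icc 1 (Fintype.card ι)) :
    ∑ j, P {ω | rank (fun i ↦ S i ω) j = k} = 1 := by
  have hmeas (j : ι) : MeasurableSet {ω | rank (fun i ↦ S i ω) j = k} :=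
    (measurable_rank j).comp (measurable_pi_lambda _ hS) (measurableSet_singleton k)
  calc ∑ j, P {ω | rank (fun i ↦ S i ω) j = k}
      = ∫⁻ ω, ∑ j, {ω | rank (fun i ↦ S i ω) j = k}.indicator 1 ω ∂P := by
        rw [lintegral_finsetSum _ fun j _ ↦ measurable_one.indicator (hmeas j)]
        simp [lintegral_indicator_one (hmeas _)]
    _ = ∫⁻ _, 1 ∂P := by
        refine lintegral_congr_ae ?_
        filter_upwards [ae_injective_of_measure_eq_zero hdist] with ω hω
        simp [Set.indicator_apply, sum_boole, card_rank_eq hω hk]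
    _ = 1 := by simp

theorem measure_rank_eq_of_exchangeable (hS : ∀ i, Measurable (S i))
    (hexch : ∀ σ : Equiv.Perm ι,
      P.map (fun ω ↦ fun i ↦ S (σ i) ω) = P.map (fun ω ↦ fun i ↦ S i ω))
    (σ : Equiv.Perm ι) (j : ι) (k : ℕ) :
    P {ω | rank (fun i ↦ S i ω) (σ j) = k} = P {ω | rank (fun i ↦ S i ω) j = k} := by
  have hset : MeasurableSet {x : ι → ℝ | rank x j = k} :=
    measurable_rank j (measurableSet_singleton k)
  calc P {ω | rank (fun i ↦ S i ω) (σ j) = k}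
      = P.map (fun ω i ↦ S (σ i) ω) {x | rank x j = k} := by
        rw [Measure.map_apply (measurable_pi_lambda _ fun i ↦ hS (σ i)) hset]
        congr 1
        ext ω
        exact (congrArg (· = k) (rank_comp_perm (fun i ↦ S i ω) σ j)).to_iff.symm
    _ = P.map (fun ω i ↦ S i ω) {x | rank x j = k} := by rw [hexch]
    _ = P {ω | rank (fun i ↦ S i ω) j = k} := Measure.map_apply (measurable_pi_lambda _ hS) hset

theorem measure_rank_eq_inv_card [IsProbabilityMeasure P] (hS : ∀ i, Measurable (S i))
    (hexch : ∀ σ : Equiv.Perm ι,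
      P.map (fun ω ↦ fun i ↦ S (σ i) ω) = P.map (fun ω ↦ fun i ↦ S i ω))
    (hdist : ∀ i j, i ≠ j → P {ω | S i ω = S j ω} = 0) (j : ι) {k : ℕ}
    (hk : k ∈ Icc 1 (Fintype.card ι)) :
    P {ω | rank (fun i ↦ S i ω) j = k} = (Fintype.card ι : ℝ≥0∞)⁻¹ := by
  classical
  have hconst (j' : ι) :
      P {ω | rank (fun i ↦ S i ω) j' = k} = P {ω | rank (fun i ↦ S i ω) j = k} := by
    simpa using measure_rank_eq_of_exchangeable hS hexch (Equiv.swap j j') j k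
  have hsum := sum_measure_rank_eq_one hS hdist hk
  simp only [hconst, sum_const, card_univ, nsmul_eq_mul] at hsum
  exact ENNReal.eq_inv_of_mul_eq_one_left (by rwa [mul_comm])

end Probability

end Conformal

theorem conformal_pvalue_uniform_general
    {Ω : Type*} [MeasurableSpace Ω] (P : Measure Ω) [IsProbabilityMeasure P]
    (n : ℕ)
    (S : Fin (n + 1) → Ω → ℝ) (hS : ∀ i, Measurable (S i))
    (hexch : ∀ σ : Equiv.Perm (Fin (n + 1)),
      P.map (fun ω => fun i => S (σ i) ω) = P.map (fun ω => fun i => S i ω))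
    (hdist : ∀ i j : Fin (n + 1), i ≠ j → P {ω | S i ω = S j ω} = 0)
    (k : ℕ) (hk : k ∈ Finset.Icc 1 (n + 1)) :
    P {ω | (1 + ((Finset.univ.filter
          (fun i : Fin n => S i.castSucc ω ≤ S (Fin.last n) ω)).card : ℝ)) / (n + 1)
        = (k : ℝ) / (n + 1)}
      = 1 / ((n : ℝ≥0∞) + 1) := by
  have hevent : {ω | (1 + ((Finset.univ.filter
        (fun i : Fin n => S i.castSucc ω ≤ S (Fin.last n) ω)).card : ℝ)) / (n + 1)
      = (k : ℝ) / (n + 1)} = {ω | Conformal.rank (fun i ↦ S i ω) (Fin.last n) = k} := by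
    ext ω
    simp only [Set.mem_ofPred_eq, Conformal.rank_last,
      div_left_inj' (by positivity : (n : ℝ) + 1 ≠ 0)]
    norm_cast
    omega
  rw [hevent, Conformal.measure_rank_eq_inv_card hS hexch hdist _ (by simpa using hk)]
  simp

/-- If the exchangeable scores are almost surely pairwise distinct,
the conformal p-value is uniformly distributed on `{1/(n+1), …, 1}`. -/
theorem conformal_pvalue_uniform
    {Ω : Type*} [MeasurableSpace Ω] (P : Measure Ω) [IsProbabilityMeasure P]
    (n : ℕ) (hn : 1 ≤ n)
    (S : Fin (n + 1) → Ω → ℝ) (hS : ∀ i, Measurable (S i))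
    (hexch : ∀ σ : Equiv.Perm (Fin (n + 1)),
      P.map (fun ω => fun i => S (σ i) ω) = P.map (fun ω => fun i => S i ω))
    (hdist : ∀ i j : Fin (n + 1), i ≠ j → P {ω | S i ω = S j ω} = 0)
    (k : ℕ) (hk : k ∈ Finset.Icc 1 (n + 1)) :
    P {ω | (1 + ((Finset.univ.filter
          (fun i : Fin n => S i.castSucc ω ≤ S (Fin.last n) ω)).card : ℝ)) / (n + 1)
        = (k : ℝ) / (n + 1)}
      = 1 / ((n : ℝ≥0∞) + 1) :=
  conformal_pvalue_uniform_general P n S hS hexch hdist k hk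
end

section
/- (Theorem 1, conformalized early stopping for outlier detection.) Let n ≥ 1 and let Z_1, …, Z_{n+1} be exchangeable random elements of a measurable space 𝒵. Let T ≥ 1, let g : 𝒵^{n+1} → {1, …, T} be a measurable model-selection map that is invariant under every permutation of its n+1 arguments, and let s : {1, …, T} × 𝒵 → ℝ be a measurable score function. Define t̂ = g(Z_1, …, Z_{n+1}), the nonconformity scores Ŝ_i = s(t̂, Z_i) for i ∈ {1, …, n+1}, and the conformal p-value û_0 = (1 + #{i ∈ {1, …, n} : Ŝ_i ≤ Ŝ_{n+1}}) / (n+1). Then for every α ∈ (0,1), P(û_0 ≤ α) ≤ α. -/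
/-!
Write `R k = #{i | S i ≤ S k}` for the rank of the `k`-th score among all `n + 1` scores and
`m = ⌊α (n + 1)⌋`; then `û₀ ≤ α` forces `R (n + 1) ≤ m`. For any scores at most `m` indices have
rank at most `m`. Since `g` is symmetric, permuting the data permutes the scores, so by
exchangeability all events `R k ≤ m` have the same probability, and summing over `k` gives
`(n + 1) P(R (n + 1) ≤ m) ≤ m ≤ α (n + 1)`.
-/
open MeasureTheory

section

open Finset
open scoped ENNReal

variable {ι : Type*}

section Rank

variable {β : Type*} [LinearOrder β]

def scoreRank [Fintype ι] (S : ι → β) (k : ι) : ℕ := #{i | S i ≤ S k}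

-- The index of rank at most `m` with the largest score dominates all the others.
theorem card_scoreRank_le [Fintype ι] (S : ι → β) (m : ℕ) : #{k | scoreRank S k ≤ m} ≤ m := by
  obtain hempty | ⟨k, hk, hmax⟩ :=
    (univ.filter fun k => scoreRank S k ≤ m).eq_empty_or_nonempty.imp id
      fun h => exists_max_image _ S h
  · simp [hempty]
  · calc #{k | scoreRank S k ≤ m} ≤ scoreRank S k :=
          card_le_card fun i hi => by simpa using hmax i hi
      _ ≤ m := (mem_filter.mp hk).2

theorem scoreRank_comp_perm [Fintype ι] (S : ι → β) (σ : Equiv.Perm ι) (j : ι) :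
    scoreRank (S ∘ σ) j = scoreRank S (σ j) :=
  card_equiv σ (by simp)

theorem scoreRank_last {n : ℕ} (S : Fin (n + 1) → β) :
    scoreRank S (Fin.last n) = #{i : Fin n | S i.castSucc ≤ S (Fin.last n)} + 1 := by
  rw [scoreRank, card_filter, card_filter, Fin.sum_univ_castSucc, if_pos le_rfl]

end Rank

section Measure

variable {Ω : Type*} [MeasurableSpace Ω] (μ : Measure Ω)

open scoped Classical in
theorem sum_measure_le_of_forall_card_le [Fintype ι] {B : ι → Set Ω}
    (hB : ∀ k, MeasurableSet (B k)) {m : ℕ} (h : ∀ ω, #{k | ω ∈ B k} ≤ m) :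
    ∑ k, μ (B k) ≤ m * μ Set.univ := by
  calc ∑ k, μ (B k) = ∫⁻ ω, ∑ k, (B k).indicator 1 ω ∂μ := by
        rw [lintegral_finsetSum _ fun k _ => measurable_one.indicator (hB k)]
        exact sum_congr rfl fun k _ => (lintegral_indicator_one (hB k)).symm
    _ ≤ ∫⁻ _, (m : ℝ≥0∞) ∂μ := lintegral_mono fun ω => by
        have hcount : ∑ k, (B k).indicator 1 ω = (#{k | ω ∈ B k} : ℝ≥0∞) := by
          simp only [card_filter, Nat.cast_sum, Nat.cast_ite, Set.indicator_apply, Pi.one_apply,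
            Nat.cast_one, Nat.cast_zero]
        exact hcount ▸ Nat.cast_le.mpr (h ω)
    _ = m * μ Set.univ := lintegral_const _

variable {𝒵 : Type*} [MeasurableSpace 𝒵]

theorem measure_preimage_eq_of_exchangeable [DecidableEq ι] {X : Ω → ι → 𝒵} (hX : Measurable X)
    (hexch : ∀ σ : Equiv.Perm ι, μ.map (fun ω => X ω ∘ σ) = μ.map X)
    {A : ι → Set (ι → 𝒵)} (hA : ∀ k, MeasurableSet (A k))
    (hAσ : ∀ (σ : Equiv.Perm ι) z j, z ∘ σ ∈ A j ↔ z ∈ A (σ j)) (j k : ι) :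
    μ (X ⁻¹' A j) = μ (X ⁻¹' A k) := by
  have hXσ : Measurable fun ω => X ω ∘ Equiv.swap k j :=
    measurable_pi_lambda _ fun i => measurable_pi_apply _ |>.comp hX
  have hpre : (fun ω => X ω ∘ Equiv.swap k j) ⁻¹' A k = X ⁻¹' A j := by
    ext ω; simp [hAσ]
  rw [← hpre, ← Measure.map_apply hXσ (hA k), hexch, Measure.map_apply hX (hA k)]

theorem measurable_scoreRank [Fintype ι] {S : (ι → 𝒵) → ι → ℝ}
    (hS : ∀ i, Measurable fun z => S z i) (k : ι) : Measurable fun z => scoreRank (S z) k := by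
  simp only [scoreRank, card_filter]
  exact Finset.measurable_sum _ fun i _ =>
    Measurable.ite (measurableSet_le (hS i) (hS k)) measurable_const measurable_const

theorem card_mul_measure_scoreRank_le [Fintype ι] {X : Ω → ι → 𝒵} (hX : Measurable X)
    (hexch : ∀ σ : Equiv.Perm ι, μ.map (fun ω => X ω ∘ σ) = μ.map X)
    {S : (ι → 𝒵) → ι → ℝ} (hS : ∀ i, Measurable fun z => S z i)
    (hSσ : ∀ (σ : Equiv.Perm ι) z, S (z ∘ σ) = S z ∘ σ) (m : ℕ) (k : ι) :
    Fintype.card ι * μ {ω | scoreRank (S (X ω)) k ≤ m} ≤ m * μ Set.univ := by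
  classical
  set A : ι → Set (ι → 𝒵) := fun k => {z | scoreRank (S z) k ≤ m}
  have hA : ∀ k, MeasurableSet (A k) := fun k =>
    measurableSet_le (measurable_scoreRank hS k) measurable_const
  have heq : ∀ j, μ (X ⁻¹' A j) = μ (X ⁻¹' A k) := fun j =>
    measure_preimage_eq_of_exchangeable μ hX hexch hA
      (fun σ z j => by simp [A, hSσ, scoreRank_comp_perm]) j k
  calc Fintype.card ι * μ (X ⁻¹' A k) = ∑ j, μ (X ⁻¹' A j) := by simp [heq]
    _ ≤ m * μ Set.univ := sum_measure_le_of_forall_card_le μ (fun j => hX (hA j)) fun ω => by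
        convert card_scoreRank_le (S (X ω)) m using 3
        rfl

end Measure

theorem ENNReal.le_ofReal_of_natCast_mul_le_floor {p : ℝ≥0∞} {N : ℕ} (hN : N ≠ 0) {α : ℝ}
    (h : N * p ≤ ⌊α * N⌋₊) : p ≤ ENNReal.ofReal α := by
  have hfloor : (⌊α * N⌋₊ : ℝ≥0∞) ≤ ENNReal.ofReal (α * N) := by
    rcases le_total 0 (α * N) with hpos | hneg
    · rw [← ENNReal.ofReal_natCast]; exact ENNReal.ofReal_le_ofReal (Nat.floor_le hpos)
    · simp [Nat.floor_of_nonpos hneg]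
  rw [ENNReal.ofReal_mul' N.cast_nonneg, ENNReal.ofReal_natCast,
    mul_comm (ENNReal.ofReal α)] at hfloor
  exact (ENNReal.mul_le_mul_iff_right (by simpa) (by simp)).mp (h.trans hfloor)

end

theorem ces_outlier_detection_valid_general
    {Ω 𝒵 : Type*} [MeasurableSpace Ω] [MeasurableSpace 𝒵]
    (P : Measure Ω) [IsProbabilityMeasure P] (n : ℕ)
    (Z : Fin (n + 1) → Ω → 𝒵) (hZ : ∀ i, Measurable (Z i))
    (hexch : ∀ σ : Equiv.Perm (Fin (n + 1)),
      P.map (fun ω => fun i => Z (σ i) ω) = P.map (fun ω => fun i => Z i ω))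
    (T : ℕ)
    (g : (Fin (n + 1) → 𝒵) → Fin T) (hg : Measurable g)
    (hginv : ∀ (σ : Equiv.Perm (Fin (n + 1))) (z : Fin (n + 1) → 𝒵),
      g (fun i => z (σ i)) = g z)
    (s : Fin T → 𝒵 → ℝ) (hs : Measurable (fun p : Fin T × 𝒵 => s p.1 p.2))
    (α : ℝ) :
    P {ω | (1 + ((Finset.univ.filter (fun i : Fin n =>
          s (g (fun j => Z j ω)) (Z i.castSucc ω)
            ≤ s (g (fun j => Z j ω)) (Z (Fin.last n) ω))).card : ℝ)) / (n + 1) ≤ α}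
      ≤ ENNReal.ofReal α := by
  set S : (Fin (n + 1) → 𝒵) → Fin (n + 1) → ℝ := fun z i => s (g z) (z i)
  have hS : ∀ i, Measurable fun z => S z i := fun i =>
    hs.comp (hg.prodMk (measurable_pi_apply i))
  have hSσ : ∀ (σ : Equiv.Perm (Fin (n + 1))) z, S (z ∘ σ) = S z ∘ σ := fun σ z => by
    ext i; exact congrArg (s · (z (σ i))) (hginv σ z)
  have hbound := card_mul_measure_scoreRank_le P (measurable_pi_lambda _ hZ) hexch hS hSσ
    ⌊α * (n + 1 : ℕ)⌋₊ (Fin.last n)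
  rw [measure_univ, mul_one, Fintype.card_fin] at hbound
  refine (measure_mono fun ω hω => ?_).trans
    (ENNReal.le_ofReal_of_natCast_mul_le_floor n.succ_ne_zero hbound)
  rw [Set.mem_ofPred_eq, div_le_iff₀ (by positivity)] at hω
  rw [Set.mem_ofPred_eq, scoreRank_last, Nat.le_floor_iff' (Nat.succ_ne_zero _)]
  push_cast
  linarith

/-- **Theorem 1, CES for outlier detection.** The conformal p-value based on
a permutation-invariant, data-driven model selection map `g` applied to the augmented
data set (calibration points plus the test point) is super-uniform. -/
theorem ces_outlier_detection_valid
    {Ω 𝒵 : Type*} [MeasurableSpace Ω] [MeasurableSpace 𝒵]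
    (P : Measure Ω) [IsProbabilityMeasure P] (n : ℕ) (hn : 1 ≤ n)
    (Z : Fin (n + 1) → Ω → 𝒵) (hZ : ∀ i, Measurable (Z i))
    (hexch : ∀ σ : Equiv.Perm (Fin (n + 1)),
      P.map (fun ω => fun i => Z (σ i) ω) = P.map (fun ω => fun i => Z i ω))
    (T : ℕ) (hT : 1 ≤ T)
    (g : (Fin (n + 1) → 𝒵) → Fin T) (hg : Measurable g)
    (hginv : ∀ (σ : Equiv.Perm (Fin (n + 1))) (z : Fin (n + 1) → 𝒵),
      g (fun i => z (σ i)) = g z)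
    (s : Fin T → 𝒵 → ℝ) (hs : Measurable (fun p : Fin T × 𝒵 => s p.1 p.2))
    (α : ℝ) (hα : α ∈ Set.Ioo (0 : ℝ) 1) :
    P {ω | (1 + ((Finset.univ.filter (fun i : Fin n =>
          s (g (fun j => Z j ω)) (Z i.castSucc ω)
            ≤ s (g (fun j => Z j ω)) (Z (Fin.last n) ω))).card : ℝ)) / (n + 1) ≤ α}
      ≤ ENNReal.ofReal α :=
  ces_outlier_detection_valid_general P n Z hZ hexch T g hg hginv s hs α
end

section
/- (Theorem 2, conformalized early stopping for multi-class classification, label-conditional coverage.) Let n ≥ 1, K ≥ 2 and let (X_1, Y_1), …, (X_{n+1}, Y_{n+1}) be exchangeable random pairs taking values in 𝒳 × {1, …, K}, where 𝒳 is a measurable space. Let T ≥ 1, let g : (𝒳 × {1, …, K})^{n+1} → {1, …, T} be measurable and invariant under every permutation of its n+1 arguments, and let s : {1, …, T} × 𝒳 × {1, …, K} → ℝ be measurable. For each y ∈ {1, …, K}, set t̂(y) = g((X_1, Y_1), …, (X_n, Y_n), (X_{n+1}, y)), Ŝ_i^y = s(t̂(y), X_i, y) for i ∈ {1, …, n+1}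 (with the convention that the test point uses features X_{n+1} and the imagined label y), and define the label-conditional conformal p-value û_y = (1 + #{i ∈ {1, …, n} : Y_i = y and Ŝ_i^y ≤ Ŝ_{n+1}^y}) / (1 + #{i ∈ {1, …, n} : Y_i = y}). Define the prediction set Ĉ_α(X_{n+1}) = {y ∈ {1, …, K} : û_y ≥ α}. Then for every α ∈ (0,1) and every y ∈ {1, …, K} with P(Y_{n+1} = y) > 0, P(Y_{n+1} ∈ Ĉ_α(X_{n+1}) | Y_{n+1} = y) ≥ 1 − α. -/
/-!
Put `Z_i = (X_i, Y_i)` and score every point with the model `g` fitted on the whole (true) data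
set and the label `y`. Because `g` is permutation invariant, permuting the data permutes the
scores, so by exchangeability the event "point `j` has label `y` and fewer than `α` times the
number of label-`y` points score at most as high as it" has the same probability for every `j`.
For each outcome at most `α` times the number of label-`y` points can have such a low rank, so
averaging over `j` bounds the probability of this event for the test point by
`α · P(Y_{n+1} = y)`. On `{Y_{n+1} = y}` the augmented data set is the true one, and the event is
exactly `{û_y < α}`.
-/

open MeasureTheory ProbabilityTheory
open scoped ENNReal

noncomputable section

/-- The augmented data set: the `n` calibration pairs together with the test point
`(X_{n+1}, y)`, where `y` is the imagined test label. -/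
def augData {Ω 𝒳 : Type*} {n K : ℕ} (X : Fin (n + 1) → Ω → 𝒳)
    (Y : Fin (n + 1) → Ω → Fin K) (y : Fin K) (ω : Ω) : Fin (n + 1) → 𝒳 × Fin K :=
  fun i => if i = Fin.last n then (X i ω, y) else (X i ω, Y i ω)

/-- Label-conditional conformal p-value of CES for multi-class classification:
the model `t̂(y) = g` of the augmented data is used to score all points with the
imagined label `y`, and only calibration points with true label `y` are compared. -/
def pvalLC {Ω 𝒳 : Type*} {n K T : ℕ} (X : Fin (n + 1) → Ω → 𝒳)
    (Y : Fin (n + 1) → Ω → Fin K) (g : (Fin (n + 1) → 𝒳 × Fin K) → Fin T)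
    (s : Fin T → 𝒳 → Fin K → ℝ) (y : Fin K) (ω : Ω) : ℝ :=
  (1 + ((Finset.univ.filter (fun i : Fin n => Y i.castSucc ω = y ∧
      s (g (augData X Y y ω)) (X i.castSucc ω) y
        ≤ s (g (augData X Y y ω)) (X (Fin.last n) ω) y)).card : ℝ)) /
  (1 + ((Finset.univ.filter (fun i : Fin n => Y i.castSucc ω = y)).card : ℝ))

open Finset

theorem Fin.card_filter_univ_castSucc {n : ℕ} (p : Fin (n + 1) → Prop) [DecidablePred p] :
    #{i | p i} = #{i : Fin n | p i.castSucc} + if p (Fin.last n) then 1 else 0 := by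
  simp only [card_filter]
  exact Fin.sum_univ_castSucc _

theorem Finset.card_filter_comp_perm {ι : Type*} [Fintype ι] (σ : Equiv.Perm ι)
    (q : ι → Prop) [DecidablePred q] : #{i | q (σ i)} = #{i | q i} := by
  simp only [card_filter]
  exact Equiv.sum_comp σ fun i => if q i then 1 else 0

theorem Finset.card_filter_card_filter_le_lt_le {ι α : Type*} [LinearOrder α] (L : Finset ι)
    (f : ι → α) {c : ℝ} (hc : 0 ≤ c) :
    (#{j ∈ L | (#{i ∈ L | f i ≤ f j} : ℝ) < c} : ℝ) ≤ c := by
  set B := {j ∈ L | (#{i ∈ L | f i ≤ f j} : ℝ) < c}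
  rcases B.eq_empty_or_nonempty with hB | hB
  · simpa [hB] using hc
  obtain ⟨j₀, hj₀, hmax⟩ := B.exists_max_image f hB
  have hsub : B ⊆ {i ∈ L | f i ≤ f j₀} := fun i hi =>
    mem_filter.mpr ⟨(mem_filter.mp hi).1, hmax i hi⟩
  calc (#B : ℝ) ≤ #{i ∈ L | f i ≤ f j₀} := by exact_mod_cast card_le_card hsub
    _ ≤ c := (mem_filter.mp hj₀).2.le

section Ranks

variable {ι E : Type*} [Fintype ι] (S : (ι → E) → ι → ℝ) (p : E → Prop) [DecidablePred p]

def rankAmong (z : ι → E) (j : ι) : ℕ := #{i | p (z i) ∧ S z i ≤ S z j}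

def lowRankEvent (c : ℝ) (j : ι) : Set (ι → E) :=
  {z | p (z j) ∧ (rankAmong S p z j : ℝ) < c * #{i | p (z i)}}

variable {S p}

theorem rankAmong_comp_perm (hS : ∀ (σ : Equiv.Perm ι) z i, S (fun k => z (σ k)) i = S z (σ i))
    (σ : Equiv.Perm ι) (z : ι → E) (j : ι) :
    rankAmong S p (fun k => z (σ k)) j = rankAmong S p z (σ j) := by
  simp only [rankAmong, hS]
  exact card_filter_comp_perm σ fun i => p (z i) ∧ S z i ≤ S z (σ j)

theorem comp_perm_mem_lowRankEvent_iff
    (hS : ∀ (σ : Equiv.Perm ι) z i, S (fun k => z (σ k)) i = S z (σ i))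
    (c : ℝ) (σ : Equiv.Perm ι) (z : ι → E) (j : ι) :
    (fun k => z (σ k)) ∈ lowRankEvent S p c j ↔ z ∈ lowRankEvent S p c (σ j) := by
  simp only [lowRankEvent, Set.mem_ofPred_eq, rankAmong_comp_perm hS,
    card_filter_comp_perm σ fun i => p (z i)]

open scoped Classical in
theorem card_filter_mem_lowRankEvent_le {c : ℝ} (hc : 0 ≤ c) (z : ι → E) :
    (#{j | z ∈ lowRankEvent S p c j} : ℝ) ≤ c * #{i | p (z i)} := by
  have := card_filter_card_filter_le_lt_le {i | p (z i)} (S z)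
    (mul_nonneg hc (Nat.cast_nonneg #{i | p (z i)}))
  simp only [filter_filter] at this
  convert this using 4
  exact Iff.rfl

theorem measurable_card_filter {β : Type*} [MeasurableSpace β] {q : ι → β → Prop}
    [∀ i, DecidablePred (q i)] (hq : ∀ i, MeasurableSet {x | q i x}) :
    Measurable fun x => #{i | q i x} := by
  simp only [card_filter]
  exact Finset.measurable_sum _ fun i _ => Measurable.ite (hq i) measurable_const measurable_const

theorem measurableSet_lowRankEvent [MeasurableSpace E] (hS : ∀ i, Measurable fun z => S z i)
    (hp : MeasurableSet {e | p e}) (c : ℝ) (j : ι) : MeasurableSet (lowRankEvent S p c j) := by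
  have hpi : ∀ i, MeasurableSet {z : ι → E | p (z i)} := fun i => measurable_pi_apply i hp
  have hrank : Measurable fun z => (rankAmong S p z j : ℝ) := measurable_from_nat.comp <|
    measurable_card_filter fun i => (hpi i).inter (measurableSet_le (hS i) (hS j))
  have hcount : Measurable fun z : ι → E => (#{i | p (z i)} : ℝ) :=
    measurable_from_nat.comp (measurable_card_filter hpi)
  exact (hpi j).inter (measurableSet_lt hrank (measurable_const.mul hcount))

end Ranks

section Exchangeable

variable {ι Ω E : Type*} [MeasurableSpace Ω] [MeasurableSpace E] {P : Measure Ω}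
  {Z : Ω → ι → E}

open scoped Classical in
theorem lintegral_card_filter_mem [Fintype ι] {A : ι → Set Ω} (hA : ∀ j, MeasurableSet (A j)) :
    ∫⁻ ω, (#{j | ω ∈ A j} : ℝ≥0∞) ∂P = ∑ j, P (A j) := by
  have hcard : ∀ ω, (#{j | ω ∈ A j} : ℝ≥0∞) = ∑ j, (A j).indicator 1 ω := fun ω => by
    simp only [card_filter, Nat.cast_sum, Nat.cast_ite, Nat.cast_one, Nat.cast_zero,
      Set.indicator_apply, Pi.one_apply]
  simp_rw [hcard]
  rw [lintegral_finsetSum _ fun j _ => measurable_one.indicator (hA j)]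
  exact Finset.sum_congr rfl fun j _ => lintegral_indicator_one (hA j)

open scoped Classical in
theorem sum_measure_le_of_card_filter_le [Fintype ι] {A B : ι → Set Ω}
    (hA : ∀ j, MeasurableSet (A j)) (hB : ∀ j, MeasurableSet (B j)) {c : ℝ≥0∞}
    (h : ∀ ω, (#{j | ω ∈ A j} : ℝ≥0∞) ≤ c * #{j | ω ∈ B j}) :
    ∑ j, P (A j) ≤ c * ∑ j, P (B j) := by
  have hBm : Measurable fun ω => (#{j | ω ∈ B j} : ℝ≥0∞) :=
    measurable_from_nat.comp (measurable_card_filter (q := fun j ω => ω ∈ B j) hB)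
  rw [← lintegral_card_filter_mem hA, ← lintegral_card_filter_mem hB,
    ← lintegral_const_mul _ hBm]
  exact lintegral_mono h

theorem measure_preimage_eq_of_exchangeable_s4 (hZ : Measurable Z)
    (hexch : ∀ σ : Equiv.Perm ι, P.map (fun ω i => Z ω (σ i)) = P.map Z)
    {B : ι → Set (ι → E)} (hB : ∀ j, MeasurableSet (B j))
    (hBσ : ∀ (σ : Equiv.Perm ι) z j, (fun i => z (σ i)) ∈ B j ↔ z ∈ B (σ j)) (j k : ι) :
    P (Z ⁻¹' B j) = P (Z ⁻¹' B k) := by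
  classical
  set σ := Equiv.swap j k
  have hZσ : Measurable fun ω i => Z ω (σ i) :=
    measurable_pi_lambda _ fun i => (measurable_pi_apply (σ i)).comp hZ
  have hpre : (fun ω i => Z ω (σ i)) ⁻¹' B j = Z ⁻¹' B k := by
    ext ω
    rw [Set.mem_preimage, Set.mem_preimage, hBσ, Equiv.swap_apply_left]
  rw [← hpre, ← Measure.map_apply hZσ (hB j), hexch, Measure.map_apply hZ (hB j)]

theorem sum_measure_preimage_eq_card_mul [Fintype ι] (hZ : Measurable Z)
    (hexch : ∀ σ : Equiv.Perm ι, P.map (fun ω i => Z ω (σ i)) = P.map Z)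
    {B : ι → Set (ι → E)} (hB : ∀ j, MeasurableSet (B j))
    (hBσ : ∀ (σ : Equiv.Perm ι) z j, (fun i => z (σ i)) ∈ B j ↔ z ∈ B (σ j)) (k : ι) :
    ∑ j, P (Z ⁻¹' B j) = Fintype.card ι * P (Z ⁻¹' B k) := by
  simp [measure_preimage_eq_of_exchangeable_s4 hZ hexch hB hBσ _ k]

open scoped Classical in
theorem measure_preimage_le_of_exchangeable [Fintype ι] (hZ : Measurable Z)
    (hexch : ∀ σ : Equiv.Perm ι, P.map (fun ω i => Z ω (σ i)) = P.map Z)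
    {B C : ι → Set (ι → E)} (hB : ∀ j, MeasurableSet (B j)) (hC : ∀ j, MeasurableSet (C j))
    (hBσ : ∀ (σ : Equiv.Perm ι) z j, (fun i => z (σ i)) ∈ B j ↔ z ∈ B (σ j))
    (hCσ : ∀ (σ : Equiv.Perm ι) z j, (fun i => z (σ i)) ∈ C j ↔ z ∈ C (σ j)) {c : ℝ≥0∞}
    (hcard : ∀ z, (#{j | z ∈ B j} : ℝ≥0∞) ≤ c * #{j | z ∈ C j}) (k : ι) :
    P (Z ⁻¹' B k) ≤ c * P (Z ⁻¹' C k) := by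
  have hsum := sum_measure_le_of_card_filter_le (P := P) (fun j => hZ (hB j))
    (fun j => hZ (hC j)) fun ω => hcard (Z ω)
  rw [sum_measure_preimage_eq_card_mul hZ hexch hB hBσ k,
    sum_measure_preimage_eq_card_mul hZ hexch hC hCσ k, mul_left_comm] at hsum
  have hι : (Fintype.card ι : ℝ≥0∞) ≠ 0 := by
    simpa using (Fintype.card_pos_iff.mpr ⟨k⟩).ne'
  exact (ENNReal.mul_le_mul_iff_right hι (ENNReal.natCast_ne_top _)).mp hsum

theorem measure_preimage_lowRankEvent_le [Fintype ι] {S : (ι → E) → ι → ℝ} {p : E → Prop}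
    [DecidablePred p]
    (hZ : Measurable Z) (hexch : ∀ σ : Equiv.Perm ι, P.map (fun ω i => Z ω (σ i)) = P.map Z)
    (hS : ∀ i, Measurable fun z => S z i)
    (hSσ : ∀ (σ : Equiv.Perm ι) z i, S (fun k => z (σ k)) i = S z (σ i))
    (hp : MeasurableSet {e | p e}) {c : ℝ} (hc : 0 ≤ c) (k : ι) :
    P (Z ⁻¹' lowRankEvent S p c k) ≤ ENNReal.ofReal c * P {ω | p (Z ω k)} := by
  classical
  refine measure_preimage_le_of_exchangeable hZ hexch (measurableSet_lowRankEvent hS hp c)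
    (fun j => measurable_pi_apply j hp) (comp_perm_mem_lowRankEvent_iff hSσ c)
    (fun _ _ _ => Iff.rfl) (fun z => ?_) k
  rw [← ENNReal.ofReal_natCast, ← ENNReal.ofReal_natCast, ← ENNReal.ofReal_mul hc]
  refine ENNReal.ofReal_le_ofReal ((card_filter_mem_lowRankEvent_le hc z).trans_eq ?_)
  congr

end Exchangeable

theorem one_sub_le_cond_of_measure_sdiff_le {Ω : Type*} [MeasurableSpace Ω] {P : Measure Ω}
    [IsFiniteMeasure P] {s t : Set Ω} (hs : MeasurableSet s) (hPs : P s ≠ 0) {a : ℝ≥0∞}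
    (h : P (s \ t) ≤ a * P s) : 1 - a ≤ P[t|s] := by
  rw [cond_apply hs, ← ENNReal.div_eq_inv_mul,
    ENNReal.le_div_iff_mul_le (.inl hPs) (.inl (measure_ne_top P s)), ENNReal.sub_mul fun _ _ => measure_ne_top P s, one_mul, tsub_le_iff_right]
  exact (measure_le_inter_add_sdiff P s t).trans (add_le_add le_rfl h)

theorem pvalLC_eq_rankAmong_div {Ω 𝒳 : Type*} {n K T : ℕ} (X : Fin (n + 1) → Ω → 𝒳)
    (Y : Fin (n + 1) → Ω → Fin K) (g : (Fin (n + 1) → 𝒳 × Fin K) → Fin T)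
    (s : Fin T → 𝒳 → Fin K → ℝ) {y : Fin K} {ω : Ω} (hy : Y (Fin.last n) ω = y) :
    pvalLC X Y g s y ω = rankAmong (fun z i => s (g z) (z i).1 y) (fun e => e.2 = y)
      (fun i => (X i ω, Y i ω)) (Fin.last n) / #{i | Y i ω = y} := by
  have haug : augData X Y y ω = fun i => (X i ω, Y i ω) := by
    funext i
    by_cases h : i = Fin.last n
    · simp [augData, h, hy]
    · simp [augData, h]
  rw [pvalLC, rankAmong, haug, Fin.card_filter_univ_castSucc,
    Fin.card_filter_univ_castSucc fun i => Y i ω = y]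
  simp [hy, add_comm]

theorem ces_classification_label_conditional_coverage_general
    {Ω 𝒳 : Type*} [MeasurableSpace Ω] [MeasurableSpace 𝒳]
    (P : Measure Ω) [IsProbabilityMeasure P]
    (n K T : ℕ)
    (X : Fin (n + 1) → Ω → 𝒳) (Y : Fin (n + 1) → Ω → Fin K)
    (hXY : ∀ i, Measurable (fun ω => (X i ω, Y i ω)))
    (hexch : ∀ σ : Equiv.Perm (Fin (n + 1)),
      P.map (fun ω => fun i => (X (σ i) ω, Y (σ i) ω)) =
        P.map (fun ω => fun i => (X i ω, Y i ω)))
    (g : (Fin (n + 1) → 𝒳 × Fin K) → Fin T) (hg : Measurable g)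
    (hginv : ∀ (σ : Equiv.Perm (Fin (n + 1))) (z : Fin (n + 1) → 𝒳 × Fin K),
      g (fun i => z (σ i)) = g z)
    (s : Fin T → 𝒳 → Fin K → ℝ)
    (hs : Measurable (fun p : Fin T × 𝒳 × Fin K => s p.1 p.2.1 p.2.2))
    (α : ℝ) (hα : α ∈ Set.Ioo (0 : ℝ) 1)
    (y : Fin K) (hy : 0 < P {ω | Y (Fin.last n) ω = y}) :
    ENNReal.ofReal (1 - α) ≤
      P[|{ω | Y (Fin.last n) ω = y}]
        {ω | α ≤ pvalLC X Y g s (Y (Fin.last n) ω) ω} := by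
  set S : (Fin (n + 1) → 𝒳 × Fin K) → Fin (n + 1) → ℝ := fun z i => s (g z) (z i).1 y
  have hS : ∀ i, Measurable fun z => S z i := fun i =>
    hs.comp (hg.prodMk ((measurable_pi_apply i).fst.prodMk measurable_const))
  have hSσ : ∀ (σ : Equiv.Perm (Fin (n + 1))) z i, S (fun k => z (σ k)) i = S z (σ i) :=
    fun σ z i => by simp only [S, hginv]
  have hlow := measure_preimage_lowRankEvent_le (p := fun e : 𝒳 × Fin K => e.2 = y)
    (measurable_pi_lambda _ hXY) hexch hS hSσ (measurable_snd (measurableSet_singleton y))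
    hα.1.le (Fin.last n)
  have hsub : {ω | Y (Fin.last n) ω = y} \ {ω | α ≤ pvalLC X Y g s (Y (Fin.last n) ω) ω} ⊆
      (fun ω i => (X i ω, Y i ω)) ⁻¹' lowRankEvent S (fun e => e.2 = y) α (Fin.last n) := by
    rintro ω ⟨hyω, hα_le⟩
    replace hyω : Y (Fin.last n) ω = y := hyω
    have hlabel : (0 : ℝ) < #{i | Y i ω = y} :=
      Nat.cast_pos.mpr (card_pos.mpr ⟨Fin.last n, by simp [hyω]⟩)
    have hlt : pvalLC X Y g s y ω < α := by simpa [hyω] using hα_le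
    rw [pvalLC_eq_rankAmong_div X Y g s hyω, div_lt_iff₀ hlabel] at hlt
    exact ⟨hyω, hlt⟩
  rw [ENNReal.ofReal_sub _ hα.1.le, ENNReal.ofReal_one]
  exact one_sub_le_cond_of_measure_sdiff_le ((hXY _).snd (measurableSet_singleton y)) hy.ne'
    ((measure_mono hsub).trans hlow)

/-- **Theorem 2, CES for multi-class classification.** The CES prediction
set `Ĉ_α(X_{n+1}) = {y : û_y ≥ α}` has label-conditional coverage at level `1 - α`. -/
theorem ces_classification_label_conditional_coverage
    {Ω 𝒳 : Type*} [MeasurableSpace Ω] [MeasurableSpace 𝒳]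
    (P : Measure Ω) [IsProbabilityMeasure P]
    (n K T : ℕ) (hn : 1 ≤ n) (hK : 2 ≤ K) (hT : 1 ≤ T)
    (X : Fin (n + 1) → Ω → 𝒳) (Y : Fin (n + 1) → Ω → Fin K)
    (hXY : ∀ i, Measurable (fun ω => (X i ω, Y i ω)))
    (hexch : ∀ σ : Equiv.Perm (Fin (n + 1)),
      P.map (fun ω => fun i => (X (σ i) ω, Y (σ i) ω)) =
        P.map (fun ω => fun i => (X i ω, Y i ω)))
    (g : (Fin (n + 1) → 𝒳 × Fin K) → Fin T) (hg : Measurable g)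
    (hginv : ∀ (σ : Equiv.Perm (Fin (n + 1))) (z : Fin (n + 1) → 𝒳 × Fin K),
      g (fun i => z (σ i)) = g z)
    (s : Fin T → 𝒳 → Fin K → ℝ)
    (hs : Measurable (fun p : Fin T × 𝒳 × Fin K => s p.1 p.2.1 p.2.2))
    (α : ℝ) (hα : α ∈ Set.Ioo (0 : ℝ) 1)
    (y : Fin K) (hy : 0 < P {ω | Y (Fin.last n) ω = y}) :
    ENNReal.ofReal (1 - α) ≤
      P[|{ω | Y (Fin.last n) ω = y}]
        {ω | α ≤ pvalLC X Y g s (Y (Fin.last n) ω) ω} :=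
  ces_classification_label_conditional_coverage_general P n K T X Y hXY hexch g hg hginv s hs α hα y
    hy

end
end

section
/- (Oracle coverage lemma used in the proof of Theorem 3.) Let n ≥ 1 and let (X_1, Y_1), …, (X_{n+1}, Y_{n+1}) be exchangeable random pairs taking values in 𝒳 × ℝ, where 𝒳 is a measurable space. Let μ_1, …, μ_T : 𝒳 → ℝ be measurable regression functions. Define the selected model m* as the smallest index t ∈ {1, …, T} minimizing the augmented squared-error loss Σ_{i=1}^{n+1} (Y_i − μ_t(X_i))². Fix α ∈ (0,1) and let k = ⌈(1−α)(n+1)⌉; if k ≤ n, let Q be the k-th smallest value of the multiset {|Y_i − μ_{m*}(X_i)| : 1 ≤ i ≤ n}, and set Q = +∞ if k > n. Then P(|Y_{n+1} − μ_{m*}(X_{n+1})| ≤ Q) ≥ 1 − α. -/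
/-!
The test residual is the `(n+1)`-th coordinate of a permutation-equivariant score: the augmented
loss is symmetric in the `n + 1` pairs, so the selected model and hence the vector of residuals
are the same for every reordering of the data. By exchangeability, the event that the residual of
pair `j` has fewer than `k` residuals strictly below it has the same probability for all `j`,
while for every outcome at least `k` indices satisfy it. Hence its probability is at least
`k / (n + 1) ≥ 1 - α`, and on this event the test residual is at most the `k`-th smallest
calibration residual.
-/

open MeasureTheory

noncomputable section

/-- The smallest index `t : Fin T` minimizing `f`. -/
def argminFin {T : ℕ} (hT : 0 < T) (f : Fin T → ℝ) : Fin T :=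
  (Finset.univ.filter fun t => ∀ u, f t ≤ f u).min' (by
    obtain ⟨t, -, ht⟩ := Finset.exists_min_image Finset.univ f ⟨⟨0, hT⟩, Finset.mem_univ _⟩
    exact ⟨t, Finset.mem_filter.mpr ⟨Finset.mem_univ t, fun u => ht u (Finset.mem_univ u)⟩⟩)

/-- The `k`-th smallest element of a multiset of reals (`k` counted from 1). -/
def kthSmallest (s : Multiset ℝ) (k : ℕ) : ℝ :=
  (s.sort (· ≤ ·)).getD (k - 1) 0

open Finset
open scoped ENNReal

section Rank

variable {ι α : Type*} [Fintype ι] [LinearOrder α]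

def strictRank (r : ι → α) (j : ι) : ℕ := #{i | r i < r j}

lemma strictRank_comp_equiv (r : ι → α) (σ : Equiv.Perm ι) (j : ι) :
    strictRank (r ∘ σ) j = strictRank r (σ j) :=
  card_equiv σ (by simp)

lemma le_card_filter_strictRank_lt (r : ι → α) {k : ℕ} (hk : k ≤ Fintype.card ι) :
    k ≤ #{j | strictRank r j < k} := by
  classical
  set S : Finset ι := {j | strictRank r j < k}
  by_contra! hS
  obtain ⟨j₀, hj₀S, hj₀min⟩ := Sᶜ.exists_min_image r
    (card_pos.mp (by rw [card_compl]; omega))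
  have hbelow : ({i | r i < r j₀} : Finset ι) ⊆ S := fun i hi => by
    by_contra hiS
    exact (hj₀min i (mem_compl.mpr hiS)).not_gt (mem_filter.mp hi).2
  exact mem_compl.mp hj₀S (mem_filter.mpr ⟨mem_univ _, (card_le_card hbelow).trans_lt hS⟩)

end Rank

lemma le_kthSmallest {s : Multiset ℝ} {k : ℕ} {c : ℝ} (hk : k ≤ Multiset.card s)
    (hc : Multiset.card (s.filter (· < c)) < k) : c ≤ kthSmallest s k := by
  set l := s.sort (· ≤ ·)
  have hl : l.length = Multiset.card s := s.length_sort _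
  have hkl : k - 1 < l.length := by omega
  rw [kthSmallest, List.getD_eq_getElem _ _ hkl]
  by_contra! hlt
  have htake : ∀ x ∈ l.take k, x < c := fun x hx => by
    obtain ⟨i, hi, rfl⟩ := List.mem_take_iff_getElem.mp hx
    exact lt_of_le_of_lt ((s.pairwise_sort _).sortedLE.getElem_le_getElem_of_le (by omega)) hlt
  have hcount : k ≤ l.countP (· < c) := calc
    k = (l.take k).countP (· < c) := by
      rw [List.countP_eq_length.mpr (by simpa using htake), List.length_take]; omega
    _ ≤ l.countP (· < c) := (List.take_sublist k l).countP_le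
  have hs : (l : Multiset ℝ) = s := s.sort_eq _
  rw [← hs, Multiset.filter_coe, Multiset.coe_card, ← List.countP_eq_length_filter] at hc
  omega

lemma le_kthSmallest_ofFn_of_strictRank_last_lt {n k : ℕ} (r : Fin (n + 1) → ℝ) (hk : k ≤ n)
    (h : strictRank r (Fin.last n) < k) :
    r (Fin.last n) ≤ kthSmallest ↑(List.ofFn fun i : Fin n => r i.castSucc) k := by
  refine le_kthSmallest (by simpa using hk) (lt_of_le_of_lt ?_ h)
  rw [← Fin.univ_val_map, Multiset.filter_map, Multiset.card_map, strictRank]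
  exact card_le_card_of_injOn (s := {i : Fin n | r i.castSucc < r (Fin.last n)})
    Fin.castSucc (fun i hi => by simpa using hi) (Fin.castSucc_injective n).injOn

lemma argminFin_eq_iff {T : ℕ} (hT : 0 < T) (f : Fin T → ℝ) (t : Fin T) :
    argminFin hT f = t ↔ (∀ u, f t ≤ f u) ∧ ∀ t', (∀ u, f t' ≤ f u) → t ≤ t' := by
  simp [argminFin, min'_eq_iff]

lemma measurable_argminFin {E : Type*} [MeasurableSpace E] {T : ℕ} (hT : 0 < T)
    {L : E → Fin T → ℝ} (hL : ∀ t, Measurable fun w => L w t) :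
    Measurable fun w => argminFin hT (L w) := by
  refine measurable_to_countable' fun t => ?_
  simp only [Set.preimage, Set.mem_singleton_iff, argminFin_eq_iff]
  have hmin : ∀ t', Measurable fun w => ∀ u, L w t' ≤ L w u := fun t' =>
    Measurable.forall fun u => measurableSet_setOfPred.mp (measurableSet_le (hL t') (hL u))
  exact measurableSet_setOfPred.mpr <|
    (hmin t).and (Measurable.forall fun t' => (hmin t').imp measurable_const)

lemma mul_measure_univ_le_sum_measure_of_le_card {ι Ω : Type*} [Fintype ι] [MeasurableSpace Ω]
    (μ : Measure Ω) {p : ι → Ω → Prop} [∀ j ω, Decidable (p j ω)]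
    (hp : ∀ j, MeasurableSet {ω | p j ω}) {k : ℕ} (hk : ∀ ω, k ≤ #{j | p j ω}) :
    k * μ Set.univ ≤ ∑ j, μ {ω | p j ω} := by
  calc (k : ℝ≥0∞) * μ Set.univ = ∫⁻ _, (k : ℝ≥0∞) ∂μ := (lintegral_const _).symm
    _ ≤ ∫⁻ ω, ∑ j, {ω | p j ω}.indicator 1 ω ∂μ := lintegral_mono fun ω => by
      simpa [Set.indicator_apply] using hk ω
    _ = ∑ j, μ {ω | p j ω} := by
      rw [lintegral_finsetSum _ fun j _ => measurable_one.indicator (hp j)]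
      simp [lintegral_indicator_one (hp _)]

section Exchangeable

variable {ι β : Type*} [Fintype ι] [MeasurableSpace β] {ν : Measure (ι → β)}
  {R : (ι → β) → ι → ℝ}

lemma measurableSet_strictRank_lt (hR : ∀ i, Measurable fun w => R w i) (j : ι) (k : ℕ) :
    MeasurableSet {w | strictRank (R w) j < k} := by
  have : Measurable fun w => strictRank (R w) j := by
    simp only [strictRank, card_filter]
    exact Finset.measurable_sum _ fun i _ =>
      Measurable.ite (measurableSet_lt (hR i) (hR j)) measurable_const measurable_const
  exact measurableSet_lt this measurable_const

lemma measure_strictRank_lt_eq (hν : ∀ σ : Equiv.Perm ι, ν.map (· ∘ σ) = ν)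
    (hR : ∀ i, Measurable fun w => R w i) (hRσ : ∀ (σ : Equiv.Perm ι) w, R (w ∘ σ) = R w ∘ σ)
    (k : ℕ) (i j : ι) :
    ν {w | strictRank (R w) i < k} = ν {w | strictRank (R w) j < k} := by
  classical
  have hpre : (· ∘ Equiv.swap i j) ⁻¹' {w | strictRank (R w) j < k} =
      {w | strictRank (R w) i < k} := by
    ext w
    simp [hRσ, strictRank_comp_equiv]
  rw [← hpre, ← Measure.map_apply (by fun_prop) (measurableSet_strictRank_lt hR j k), hν]

theorem div_card_le_measure_strictRank_lt [IsProbabilityMeasure ν]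
    (hν : ∀ σ : Equiv.Perm ι, ν.map (· ∘ σ) = ν)
    (hR : ∀ i, Measurable fun w => R w i) (hRσ : ∀ (σ : Equiv.Perm ι) w, R (w ∘ σ) = R w ∘ σ)
    {k : ℕ} (hk : k ≤ Fintype.card ι) (j : ι) :
    (k : ℝ≥0∞) / Fintype.card ι ≤ ν {w | strictRank (R w) j < k} := by
  refine ENNReal.div_le_of_le_mul ?_
  calc (k : ℝ≥0∞) = k * ν Set.univ := by simp
    _ ≤ ∑ i, ν {w | strictRank (R w) i < k} :=
      mul_measure_univ_le_sum_measure_of_le_card ν (fun i => measurableSet_strictRank_lt hR i k)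
        fun w => le_card_filter_strictRank_lt (R w) hk
    _ = _ := by simp [measure_strictRank_lt_eq hν hR hRσ k _ j, mul_comm]

end Exchangeable

section Regression

variable {𝒳 ι : Type*} [Fintype ι] {T : ℕ} (hT : 0 < T) (μreg : Fin T → 𝒳 → ℝ)

def augmentedLoss (w : ι → 𝒳 × ℝ) (t : Fin T) : ℝ := ∑ i, ((w i).2 - μreg t (w i).1) ^ 2

def selectedModel (w : ι → 𝒳 × ℝ) : Fin T := argminFin hT (augmentedLoss μreg w)

def selectedResidual (w : ι → 𝒳 × ℝ) (i : ι) : ℝ :=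
  |(w i).2 - μreg (selectedModel hT μreg w) (w i).1|

lemma augmentedLoss_comp_equiv (σ : Equiv.Perm ι) (w : ι → 𝒳 × ℝ) :
    augmentedLoss μreg (w ∘ σ) = augmentedLoss μreg w :=
  funext fun t => Equiv.sum_comp σ fun i => ((w i).2 - μreg t (w i).1) ^ 2

lemma selectedResidual_comp_equiv (σ : Equiv.Perm ι) (w : ι → 𝒳 × ℝ) :
    selectedResidual hT μreg (w ∘ σ) = selectedResidual hT μreg w ∘ σ := by
  ext i
  rw [Function.comp_apply, selectedResidual, selectedModel, augmentedLoss_comp_equiv]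
  rfl

lemma measurable_selectedResidual [MeasurableSpace 𝒳] (hμ : ∀ t, Measurable (μreg t)) (i : ι) :
    Measurable fun w => selectedResidual hT μreg w i := by
  have hloss : ∀ t, Measurable fun w : ι → 𝒳 × ℝ => augmentedLoss μreg w t := fun t =>
    Finset.measurable_sum _ fun i _ =>
      ((measurable_pi_apply i).snd.sub ((hμ t).comp (measurable_pi_apply i).fst)).pow_const 2
  have hfit : Measurable fun p : Fin T × 𝒳 => μreg p.1 p.2 :=
    measurable_from_prod_countable_right fun t => hμ t
  exact ((measurable_pi_apply i).snd.sub
    (hfit.comp ((measurable_argminFin hT hloss).prodMk (measurable_pi_apply i).fst))).abs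

end Regression

lemma ofReal_le_natCeil_mul_div (x : ℝ) {m : ℕ} (hm : m ≠ 0) :
    ENNReal.ofReal x ≤ (⌈x * m⌉₊ : ℝ≥0∞) / m := by
  rw [ENNReal.le_div_iff_mul_le (by simp [hm]) (by simp), ← ENNReal.ofReal_natCast m,
    ← ENNReal.ofReal_mul' (Nat.cast_nonneg m), ← ENNReal.ofReal_natCast]
  exact ENNReal.ofReal_le_ofReal (Nat.le_ceil _)

theorem ces_regression_oracle_coverage_general
    {Ω 𝒳 : Type*} [MeasurableSpace Ω] [MeasurableSpace 𝒳]
    (P : Measure Ω) [IsProbabilityMeasure P]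
    (n T : ℕ) (hT : 0 < T)
    (X : Fin (n + 1) → Ω → 𝒳) (Y : Fin (n + 1) → Ω → ℝ)
    (hXY : ∀ i, Measurable (fun ω => (X i ω, Y i ω)))
    (hexch : ∀ σ : Equiv.Perm (Fin (n + 1)),
      P.map (fun ω => fun i => (X (σ i) ω, Y (σ i) ω)) =
        P.map (fun ω => fun i => (X i ω, Y i ω)))
    (μreg : Fin T → 𝒳 → ℝ) (hμ : ∀ t, Measurable (μreg t))
    (α : ℝ) (hα : α ∈ Set.Ioo (0 : ℝ) 1) :
    ENNReal.ofReal (1 - α) ≤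
      P {ω |
        let mstar : Fin T :=
          argminFin hT (fun t => ∑ i : Fin (n + 1), (Y i ω - μreg t (X i ω)) ^ 2)
        let k : ℕ := ⌈(1 - α) * ((n : ℝ) + 1)⌉₊
        n < k ∨
          |Y (Fin.last n) ω - μreg mstar (X (Fin.last n) ω)| ≤
            kthSmallest
              (↑(List.ofFn fun i : Fin n =>
                |Y i.castSucc ω - μreg mstar (X i.castSucc ω)|)) k} := by
  set k := ⌈(1 - α) * ((n : ℝ) + 1)⌉₊
  rcases lt_or_ge n k with hkn | hkn
  · simpa [hkn] using hα.1.le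
  set W : Ω → Fin (n + 1) → 𝒳 × ℝ := fun ω i => (X i ω, Y i ω)
  have hW : Measurable W := measurable_pi_lambda _ hXY
  have : IsProbabilityMeasure (P.map W) := Measure.isProbabilityMeasure_map hW.aemeasurable
  have hν : ∀ σ : Equiv.Perm (Fin (n + 1)), (P.map W).map (· ∘ σ) = P.map W := fun σ => by
    rw [Measure.map_map (by fun_prop) hW]
    exact hexch σ
  have hR := measurable_selectedResidual (ι := Fin (n + 1)) hT μreg hμ
  calc ENNReal.ofReal (1 - α) ≤ (k : ℝ≥0∞) / Fintype.card (Fin (n + 1)) := by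
        simpa using ofReal_le_natCeil_mul_div (1 - α) n.succ_ne_zero
    _ ≤ P.map W {w | strictRank (selectedResidual hT μreg w) (Fin.last n) < k} :=
        div_card_le_measure_strictRank_lt hν hR (selectedResidual_comp_equiv hT μreg)
          (by simpa using hkn.trans n.le_succ) _
    _ = P (W ⁻¹' {w | strictRank (selectedResidual hT μreg w) (Fin.last n) < k}) :=
        Measure.map_apply hW (measurableSet_strictRank_lt hR _ _)
    _ ≤ _ := measure_mono fun ω hω =>
        Or.inr (le_kthSmallest_ofFn_of_strictRank_last_lt _ hkn hω)

/-- **oracle coverage lemma in the proof of Theorem 3.**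
The model `m*` minimizing the augmented squared-error loss (including the true test pair)
yields, after standard conformal calibration of its absolute residuals, a prediction
interval covering `Y_{n+1}` with probability at least `1 - α`.  The value `Q = +∞` when
`k > n` is encoded by the disjunct `n < k`. -/
theorem ces_regression_oracle_coverage
    {Ω 𝒳 : Type*} [MeasurableSpace Ω] [MeasurableSpace 𝒳]
    (P : Measure Ω) [IsProbabilityMeasure P]
    (n T : ℕ) (hn : 1 ≤ n) (hT : 0 < T)
    (X : Fin (n + 1) → Ω → 𝒳) (Y : Fin (n + 1) → Ω → ℝ)
    (hXY : ∀ i, Measurable (fun ω => (X i ω, Y i ω)))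
    (hexch : ∀ σ : Equiv.Perm (Fin (n + 1)),
      P.map (fun ω => fun i => (X (σ i) ω, Y (σ i) ω)) =
        P.map (fun ω => fun i => (X i ω, Y i ω)))
    (μreg : Fin T → 𝒳 → ℝ) (hμ : ∀ t, Measurable (μreg t))
    (α : ℝ) (hα : α ∈ Set.Ioo (0 : ℝ) 1) :
    ENNReal.ofReal (1 - α) ≤
      P {ω |
        let mstar : Fin T :=
          argminFin hT (fun t => ∑ i : Fin (n + 1), (Y i ω - μreg t (X i ω)) ^ 2)
        let k : ℕ := ⌈(1 - α) * ((n : ℝ) + 1)⌉₊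
        n < k ∨
          |Y (Fin.last n) ω - μreg mstar (X (Fin.last n) ω)| ≤
            kthSmallest
              (↑(List.ofFn fun i : Fin n =>
                |Y i.castSucc ω - μreg mstar (X i.castSucc ω)|)) k} :=
  ces_regression_oracle_coverage_general P n T hT X Y hXY hexch μreg hμ α hα
end
end

section
/- (Proposition A1, Markov-type lower bound.) Let n ≥ 1, α ∈ (0,1), and set l = ⌊α(n+1)⌋; assume 1 ≤ l ≤ n. Let T ≥ 1 and let W_1, …, W_T be random variables on a common probability space (arbitrary joint dependence), each having the Beta(n+1−l, l) distribution. Then for every b > 1 with 1/(bT) < 1, E[min_{1 ≤ t ≤ T} W_t] ≥ I^{−1}(1/(bT); n+1−l, l) · (1 − 1/b). -/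
noncomputable section

open MeasureTheory
open scoped ENNReal

/-- Density of the Beta distribution with parameters `c, d > 0` (with respect to
Lebesgue measure), supported on `(0,1)`. -/
def betaPDF (c d : ℝ) (x : ℝ) : ℝ≥0∞ :=
  if 0 < x ∧ x < 1 then
    ENNReal.ofReal (Real.Gamma (c + d) / (Real.Gamma c * Real.Gamma d) *
      x ^ (c - 1) * (1 - x) ^ (d - 1))
  else 0

/-- The Beta distribution with parameters `c, d`. -/
def betaMeasure (c d : ℝ) : Measure ℝ :=
  volume.withDensity (betaPDF c d)

/-- `I(x; c, d)`: the cumulative distribution function of the Beta distribution. -/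
def betaCDF (c d x : ℝ) : ℝ := (betaMeasure c d (Set.Iic x)).toReal

/-- `I⁻¹(p; c, d)`: the (generalized) inverse of the Beta CDF; on `(0,1)` it is the
unique `a ∈ (0,1)` with `I(a; c, d) = p`, since the Beta CDF is continuous and
strictly increasing there. -/
def betaInvCDF (c d p : ℝ) : ℝ := sInf {x : ℝ | p ≤ betaCDF c d x}

open Set Filter Topology

/-!
Let `a` be the `1/(bT)`-quantile of the common law of the `W_t`. By the union bound,
`min_t W_t < a` with probability at most `T · 1/(bT) = 1/b`, so Markov's inequality for the
nonnegative variable `min_t W_t` gives `E[min_t W_t] ≥ a · P(min_t W_t ≥ a) ≥ a (1 - 1/b)`.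
Only the marginal laws enter, never the joint dependence.
-/

lemma Monotone.leftLim_sInf_setOf_le_le {f : ℝ → ℝ} (hf : Monotone f) {p : ℝ}
    (hS : BddBelow {x | p ≤ f x}) : Function.leftLim f (sInf {x | p ≤ f x}) ≤ p := by
  refine _root_.le_of_tendsto (hf.tendsto_leftLim _)
    (eventually_nhdsWithin_of_forall fun y hy => ?_)
  by_contra! hpy
  exact (not_le.mpr (mem_Iio.mp hy)) (csInf_le hS hpy.le)

lemma ProbabilityTheory.bddBelow_setOf_le_cdf (μ : Measure ℝ) {p : ℝ} (hp : 0 < p) :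
    BddBelow {x | p ≤ cdf μ x} := by
  obtain ⟨x₀, hx₀⟩ := eventually_atBot.mp ((tendsto_cdf_atBot μ).eventually (gt_mem_nhds hp))
  exact ⟨x₀, fun x hx => le_of_not_gt fun hlt => (hx₀ x hlt.le).not_ge hx⟩

/-- `μ (Iio a)` is the left limit of the CDF at `a`, and the CDF stays below `p` to the left
of the quantile `a`. -/
lemma measure_Iio_sInf_le (μ : Measure ℝ) [IsProbabilityMeasure μ] {p : ℝ} (hp : 0 < p) :
    μ (Iio (sInf {x | p ≤ μ.real (Iic x)})) ≤ ENNReal.ofReal p := by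
  open ProbabilityTheory in
  simp_rw [← cdf_eq_real]
  calc μ (Iio (sInf {x | p ≤ cdf μ x}))
      = ENNReal.ofReal (Function.leftLim (cdf μ) (sInf {x | p ≤ cdf μ x})) := by
        rw [← sub_zero (Function.leftLim _ _), ← (cdf μ).measure_Iio (tendsto_cdf_atBot μ),
          measure_cdf]
    _ ≤ ENNReal.ofReal p := ENNReal.ofReal_le_ofReal
        ((monotone_cdf μ).leftLim_sInf_setOf_le_le (bddBelow_setOf_le_cdf μ hp))

lemma ae_betaMeasure_mem_Icc (c d : ℝ) : ∀ᵐ x ∂betaMeasure c d, x ∈ Icc (0 : ℝ) 1 := by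
  rw [ae_iff, betaMeasure, withDensity_apply' _ _]
  refine (setLIntegral_congr_fun measurableSet_Icc.compl fun x hx => ?_).trans lintegral_zero
  exact if_neg fun h => hx ⟨h.1.le, h.2.le⟩

lemma setOf_iInf_lt_eq_iUnion {ι α : Type*} [Finite ι] [Nonempty ι] (W : ι → α → ℝ) (a : ℝ) :
    {x | ⨅ t, W t x < a} = ⋃ t, {x | W t x < a} := by
  ext x
  simp [ciInf_lt_iff (Finite.bddBelow_range _)]

section MinOfRandomVariables

variable {ι Ω : Type*} [Fintype ι] [Nonempty ι] [MeasurableSpace Ω] {P : Measure Ω}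
  {W : ι → Ω → ℝ}

lemma measureReal_iInf_lt_le [IsFiniteMeasure P] {a p : ℝ} (hp : 0 ≤ p)
    (hW : ∀ t, P {ω | W t ω < a} ≤ ENNReal.ofReal p) :
    P.real {ω | ⨅ t, W t ω < a} ≤ Fintype.card ι * p := by
  rw [setOf_iInf_lt_eq_iUnion]
  calc P.real (⋃ t, {ω | W t ω < a}) ≤ ∑ t, P.real {ω | W t ω < a} :=
        measureReal_iUnion_fintype_le _
    _ ≤ ∑ _ : ι, p := Finset.sum_le_sum fun t _ => ENNReal.toReal_le_of_le_ofReal hp (hW t)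
    _ = Fintype.card ι * p := by simp

lemma integrable_iInf (hW : ∀ t, Measurable (W t)) (hW0 : ∀ t, 0 ≤ᵐ[P] W t)
    (hWi : ∀ t, Integrable (W t) P) : Integrable (fun ω => ⨅ t, W t ω) P := by
  obtain ⟨t₀⟩ := ‹Nonempty ι›
  refine (hWi t₀).mono' (Measurable.iInf hW).aestronglyMeasurable ?_
  filter_upwards [ae_all_iff.mpr hW0] with ω hω
  rw [Real.norm_of_nonneg (le_ciInf hω)]
  exact ciInf_le (Finite.bddBelow_range _) t₀

lemma mul_one_sub_le_integral_iInf [IsProbabilityMeasure P]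
    (hW : ∀ t, Measurable (W t)) (hW0 : ∀ t, 0 ≤ᵐ[P] W t) (hWi : ∀ t, Integrable (W t) P)
    {a p : ℝ} (hp : 0 ≤ p) (hcard : Fintype.card ι * p ≤ 1)
    (hlt : ∀ t, P {ω | W t ω < a} ≤ ENNReal.ofReal p) :
    a * (1 - Fintype.card ι * p) ≤ ∫ ω, ⨅ t, W t ω ∂P := by
  have hmin0 : 0 ≤ᵐ[P] fun ω => ⨅ t, W t ω := by
    filter_upwards [ae_all_iff.mpr hW0] with ω hω using le_ciInf hω
  rcases le_or_gt a 0 with ha | ha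
  · exact (mul_nonpos_of_nonpos_of_nonneg ha (sub_nonneg.mpr hcard)).trans
      (integral_nonneg_of_ae hmin0)
  have hge : 1 - Fintype.card ι * p ≤ P.real {ω | a ≤ ⨅ t, W t ω} := by
    have hcompl := probReal_compl_eq_one_sub (μ := P)
      (measurableSet_lt (Measurable.iInf hW) (measurable_const (a := a)))
    simp only [compl_ofPred, not_lt] at hcompl
    linarith [measureReal_iInf_lt_le hp hlt]
  calc a * (1 - Fintype.card ι * p) ≤ a * P.real {ω | a ≤ ⨅ t, W t ω} :=
        mul_le_mul_of_nonneg_left hge ha.le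
    _ ≤ ∫ ω, ⨅ t, W t ω ∂P :=
        mul_meas_ge_le_integral_of_nonneg hmin0 (integrable_iInf hW hW0 hWi) a

end MinOfRandomVariables

theorem expectation_min_beta_ge_general
    {Ω : Type*} [MeasurableSpace Ω] (P : Measure Ω) [IsProbabilityMeasure P]
    (n : ℕ) (l : ℕ)
    (T : ℕ) (hT : 0 < T) (W : Fin T → Ω → ℝ) (hW : ∀ t, Measurable (W t))
    (hbeta : ∀ t, P.map (W t) = betaMeasure ((n : ℝ) + 1 - l) l)
    (b : ℝ) (hb : 1 < b) :
    betaInvCDF ((n : ℝ) + 1 - l) l (1 / (b * T)) * (1 - 1 / b) ≤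
      ∫ ω, (⨅ t, W t ω) ∂P := by
  have : Nonempty (Fin T) := ⟨⟨0, hT⟩⟩
  have : IsProbabilityMeasure (betaMeasure ((n : ℝ) + 1 - l) l) :=
    hbeta ⟨0, hT⟩ ▸ Measure.isProbabilityMeasure_map (hW _).aemeasurable
  have hW01 (t : Fin T) : ∀ᵐ ω ∂P, W t ω ∈ Icc (0 : ℝ) 1 :=
    ae_of_ae_map (hW t).aemeasurable (hbeta t ▸ ae_betaMeasure_mem_Icc _ _)
  have hp : 0 < 1 / (b * T) := by positivity
  have hlt (t : Fin T) :
      P (W t ⁻¹' Iio (betaInvCDF ((n : ℝ) + 1 - l) l (1 / (b * T)))) ≤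
        ENNReal.ofReal (1 / (b * T)) := by
    rw [← Measure.map_apply (hW t) measurableSet_Iio, hbeta t]
    exact measure_Iio_sInf_le _ hp
  have hcard : (Fintype.card (Fin T) : ℝ) * (1 / (b * T)) = 1 / b := by
    rw [Fintype.card_fin]
    field_simp
  have key := mul_one_sub_le_integral_iInf hW (fun t => (hW01 t).mono fun _ h => h.1)
    (fun t => .of_mem_Icc 0 1 (hW t).aemeasurable (hW01 t)) hp.le
    (hcard ▸ div_le_one_of_le₀ hb.le (by positivity)) hlt
  rwa [hcard] at key

/-- **Proposition A1, Markov-type lower bound.**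
If each `W_t` has the `Beta(n+1−l, l)` distribution (arbitrary joint dependence), with
`l = ⌊α(n+1)⌋`, then `E[min_t W_t] ≥ I⁻¹(1/(bT); n+1−l, l) · (1 − 1/b)`. -/
theorem expectation_min_beta_ge
    {Ω : Type*} [MeasurableSpace Ω] (P : Measure Ω) [IsProbabilityMeasure P]
    (n : ℕ) (hn : 1 ≤ n) (α : ℝ) (hα : α ∈ Set.Ioo (0 : ℝ) 1)
    (l : ℕ) (hl : l = ⌊α * ((n : ℝ) + 1)⌋₊) (hl1 : 1 ≤ l) (hln : l ≤ n)
    (T : ℕ) (hT : 0 < T) (W : Fin T → Ω → ℝ) (hW : ∀ t, Measurable (W t))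
    (hbeta : ∀ t, P.map (W t) = betaMeasure ((n : ℝ) + 1 - l) l)
    (b : ℝ) (hb : 1 < b) (hbT : 1 / (b * T) < 1) :
    betaInvCDF ((n : ℝ) + 1 - l) l (1 / (b * T)) * (1 - 1 / b) ≤
      ∫ ω, (⨅ t, W t ω) ∂P :=
  expectation_min_beta_ge_general P n l T hT W hW hbeta b hb

end
end

section
/- (Coverage lower bound for a data-driven model selection; content of Proposition A1 and Corollaries A2–A3 for the naive benchmark.) Let (Ω, F, P) be a probability space and G ⊆ F a sub-σ-algebra. Let n ≥ 1, α ∈ (0,1), l = ⌊α(n+1)⌋ with 1 ≤ l ≤ n, and T ≥ 1. Let A_1, …, A_T ∈ F be events such that for each t ∈ {1, …, T} the conditional probability W_t = P(A_t | G) has the Beta(n+1−l, l) distribution. Let τ : Ω → {1, …, T} be G-measurable. Then for every b > 1 with 1/(bT) < 1, P(A_τ) ≥ I^{−1}(1/(bT); n+1−l, l) · (1 − 1/b), where A_τ denotes the event {ω : ω ∈ A_{τ(ω)}}. -/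
noncomputable section

open MeasureTheory
open scoped ENNReal

/-!
Since `{τ = t}` is `G`-measurable, `P({τ = t} ∩ A_t)` is the integral of `W_t = P(A_t | G)`
over `{τ = t}`, hence at least `a · (P(τ = t) - P(W_t < a))` for every `a ≥ 0` (Markov).
For `a = I⁻¹(1/(bT))` each `{W_t < a}` has probability at most `1/(bT)`, so summing over the
`T` fibres of `τ` gives `P(A_τ) ≥ a (1 - T · 1/(bT)) = a (1 - 1/b)`.
-/

open Set

theorem measure_Iio_le_of_forall_lt {μ : Measure ℝ} {x : ℝ} {c : ℝ≥0∞}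
    (h : ∀ y < x, μ (Iic y) ≤ c) : μ (Iio x) ≤ c := by
  obtain ⟨u, hu_mono, hu_lt, hu_lim⟩ := exists_seq_strictMono_tendsto x
  have hIic_mono : Monotone fun n => Iic (u n) := fun _ _ hmn =>
    Iic_subset_Iic.mpr (hu_mono.monotone hmn)
  rw [← iUnion_Iic_eq_Iio_of_lt_of_tendsto hu_lt hu_lim, hIic_mono.measure_iUnion]
  exact iSup_le fun n => h _ (hu_lt n)

theorem betaMeasure_Iic_of_nonpos (c d : ℝ) {x : ℝ} (hx : x ≤ 0) :
    betaMeasure c d (Iic x) = 0 := by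
  rw [betaMeasure, withDensity_apply _ measurableSet_Iic]
  refine (setLIntegral_congr_fun measurableSet_Iic fun y hy => ?_).trans lintegral_zero
  exact if_neg fun h => (h.1.trans_le ((mem_Iic.mp hy).trans hx)).false

theorem betaMeasure_Iio_betaInvCDF_le {c d p : ℝ} [IsFiniteMeasure (betaMeasure c d)]
    (hp : 0 < p) : betaMeasure c d (Iio (betaInvCDF c d p)) ≤ ENNReal.ofReal p := by
  have hbdd : BddBelow {x | p ≤ betaCDF c d x} := by
    refine ⟨0, fun x (hx : p ≤ betaCDF c d x) => le_of_not_gt fun hx0 => hp.not_ge ?_⟩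
    rwa [betaCDF, betaMeasure_Iic_of_nonpos c d hx0.le, ENNReal.toReal_zero] at hx
  refine measure_Iio_le_of_forall_lt fun y hy => ?_
  have hy_cdf : betaCDF c d y < p := lt_of_not_ge fun h => (csInf_le hbdd h).not_gt hy
  rw [← ENNReal.ofReal_toReal (measure_ne_top _ (Iic y))]
  exact ENNReal.ofReal_le_ofReal hy_cdf.le

theorem measureReal_lt_betaInvCDF_le {Ω : Type*} [mΩ : MeasurableSpace Ω] {P : Measure Ω}
    [IsProbabilityMeasure P] {X : Ω → ℝ} (hX : Measurable X) {c d p : ℝ}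
    (hX_beta : P.map X = betaMeasure c d) (hp : 0 < p) :
    P.real {ω | X ω < betaInvCDF c d p} ≤ p := by
  have : IsProbabilityMeasure (betaMeasure c d) :=
    hX_beta ▸ Measure.isProbabilityMeasure_map hX.aemeasurable
  change (P (X ⁻¹' Iio _)).toReal ≤ p
  rw [← Measure.map_apply hX measurableSet_Iio, hX_beta]
  exact ENNReal.toReal_le_of_le_ofReal hp.le (betaMeasure_Iio_betaInvCDF_le hp)

section SelectedEvent

variable {Ω : Type*} {m : MeasurableSpace Ω} [mΩ : MeasurableSpace Ω] {P : Measure Ω}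

theorem mul_sub_measureReal_condExp_lt_le [IsFiniteMeasure P] (hm : m ≤ mΩ) {s A : Set Ω}
    (hs : MeasurableSet[m] s) (hA : MeasurableSet A) {a : ℝ} (ha : 0 ≤ a) :
    a * (P.real s - P.real {ω | P[A.indicator (fun _ => (1 : ℝ)) | m] ω < a}) ≤
      P.real (s ∩ A) := by
  set W := P[A.indicator (fun _ => (1 : ℝ)) | m]
  have hW : Measurable W := (stronglyMeasurable_condExp.mono hm).measurable
  have hE : MeasurableSet (s ∩ {ω | a ≤ W ω}) :=
    (hm _ hs).inter (measurableSet_le measurable_const hW)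
  have hs_le : P.real s ≤ P.real (s ∩ {ω | a ≤ W ω}) + P.real {ω | W ω < a} := by
    refine (measureReal_mono fun ω hω => ?_).trans (measureReal_union_le _ _)
    exact (le_or_gt a (W ω)).imp (fun h => ⟨hω, h⟩) id
  have hW_nonneg : 0 ≤ᵐ[P] W :=
    condExp_nonneg (ae_of_all _ fun ω => indicator_nonneg (fun _ _ => zero_le_one) ω)
  calc a * (P.real s - P.real {ω | W ω < a})
      ≤ a * P.real (s ∩ {ω | a ≤ W ω}) := by gcongr; linarith
    _ ≤ ∫ ω in s ∩ {ω | a ≤ W ω}, W ω ∂P :=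
      setIntegral_ge_of_const_le_real hE (measure_ne_top _ _) (fun ω hω => hω.2)
        integrable_condExp.integrableOn
    _ ≤ ∫ ω in s, W ω ∂P :=
      setIntegral_mono_set integrable_condExp.integrableOn (ae_restrict_of_ae hW_nonneg)
        inter_subset_left.eventuallyLE
    _ = ∫ ω in s, A.indicator (fun _ => (1 : ℝ)) ω ∂P :=
      setIntegral_condExp hm ((integrable_const 1).indicator hA) hs
    _ = P.real (s ∩ A) := by
      rw [setIntegral_indicator hA, setIntegral_const, smul_eq_mul, mul_one]

theorem measureReal_setOf_mem_comp_eq_sum {ι : Type*} [Fintype ι] [MeasurableSpace ι]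
    [MeasurableSingletonClass ι] [IsFiniteMeasure P] {A : ι → Set Ω} {τ : Ω → ι}
    (hτ : Measurable τ) :
    P.real {ω | ω ∈ A (τ ω)} = ∑ i, P.real (τ ⁻¹' {i} ∩ A i) := by
  have hfibre (i : ι) : τ ⁻¹' {i} ∩ {ω | ω ∈ A (τ ω)} = τ ⁻¹' {i} ∩ A i := by
    ext ω
    simp +contextual only [mem_inter_iff, mem_preimage, mem_singleton_iff, mem_ofPred_eq,
      and_congr_right_iff, implies_true]
  simp_rw [← hfibre, ← measureReal_restrict_apply (hτ (measurableSet_singleton _))]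
  rw [sum_measureReal_preimage_singleton _ fun i _ => hτ (measurableSet_singleton i),
    Finset.coe_univ, preimage_univ, measureReal_restrict_apply MeasurableSet.univ, univ_inter]

theorem mul_sub_card_mul_le_measureReal_setOf_mem_comp [IsProbabilityMeasure P] {ι : Type*}
    [Fintype ι] [MeasurableSpace ι] [MeasurableSingletonClass ι] (hm : m ≤ mΩ)
    {A : ι → Set Ω} (hA : ∀ i, MeasurableSet (A i)) {τ : Ω → ι} (hτ : Measurable[m] τ)
    {a q : ℝ} (ha : 0 ≤ a)
    (hq : ∀ i, P.real {ω | P[(A i).indicator (fun _ => (1 : ℝ)) | m] ω < a} ≤ q) :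
    a * (1 - Fintype.card ι * q) ≤ P.real {ω | ω ∈ A (τ ω)} := by
  have hfibre (i : ι) : MeasurableSet[m] (τ ⁻¹' {i}) := hτ (measurableSet_singleton i)
  have hfibres_sum : ∑ i, P.real (τ ⁻¹' {i}) = 1 := by
    rw [sum_measureReal_preimage_singleton _ fun i _ => hm _ (hfibre i), Finset.coe_univ,
      preimage_univ, probReal_univ]
  calc a * (1 - Fintype.card ι * q) = ∑ i, a * (P.real (τ ⁻¹' {i}) - q) := by
        rw [← Finset.mul_sum, Finset.sum_sub_distrib, hfibres_sum, Finset.sum_const,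
          Finset.card_univ, nsmul_eq_mul]
    _ ≤ ∑ i, a * (P.real (τ ⁻¹' {i}) -
          P.real {ω | P[(A i).indicator (fun _ => (1 : ℝ)) | m] ω < a}) := by
        gcongr with i; exact hq i
    _ ≤ ∑ i, P.real (τ ⁻¹' {i} ∩ A i) :=
        Finset.sum_le_sum fun i _ => mul_sub_measureReal_condExp_lt_le hm (hfibre i) (hA i) ha
    _ = P.real {ω | ω ∈ A (τ ω)} := (measureReal_setOf_mem_comp_eq_sum (hτ.mono hm le_rfl)).symm

end SelectedEvent

theorem selected_model_coverage_bound_general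
    {Ω : Type*} [mΩ : MeasurableSpace Ω] (P : Measure Ω) [IsProbabilityMeasure P]
    (G : MeasurableSpace Ω) (hG : G ≤ mΩ)
    (n : ℕ) (l : ℕ)
    (T : ℕ)
    (A : Fin T → Set Ω) (hA : ∀ t, MeasurableSet[mΩ] (A t))
    (hbeta : ∀ t,
      @Measure.map Ω ℝ mΩ _
          (MeasureTheory.condExp G P ((A t).indicator fun _ => (1 : ℝ))) P =
        betaMeasure ((n : ℝ) + 1 - l) l)
    (τ : Ω → Fin T) (hτ : Measurable[G] τ)
    (b : ℝ) (hb : 1 < b) :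
    ENNReal.ofReal (betaInvCDF ((n : ℝ) + 1 - l) l (1 / (b * T)) * (1 - 1 / b)) ≤
      P {ω | ω ∈ A (τ ω)} := by
  obtain ⟨ω₀⟩ := nonempty_of_isProbabilityMeasure P
  have hT : (0 : ℝ) < T := mod_cast (τ ω₀).pos
  have hp : 0 < 1 / (b * T) := by positivity
  set a := betaInvCDF ((n : ℝ) + 1 - l) l (1 / (b * T))
  rcases lt_or_ge a 0 with ha | ha
  · have h1b : 0 ≤ 1 - 1 / b := sub_nonneg.mpr ((div_le_one (by positivity)).mpr hb.le)
    rw [ENNReal.ofReal_of_nonpos (mul_nonpos_of_nonpos_of_nonneg ha.le h1b)]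
    exact zero_le
  -- `G` is the most recent local instance, so the ambient σ-algebra is passed by name.
  have hq (t : Fin T) := measureReal_lt_betaInvCDF_le (mΩ := mΩ)
    (stronglyMeasurable_condExp.mono hG).measurable (hbeta t) hp
  have hbound := mul_sub_card_mul_le_measureReal_setOf_mem_comp (mΩ := mΩ) hG hA hτ ha hq
  rw [Fintype.card_fin, show (T : ℝ) * (1 / (b * T)) = 1 / b by field_simp] at hbound
  exact ENNReal.ofReal_le_of_le_toReal hbound

/-- **coverage lower bound for data-driven model selection.**
If each coverage event `A_t` has `G`-conditional probability with the
`Beta(n+1−l, l)` distribution and the model `τ` is selected `G`-measurably, then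
the coverage of the selected model satisfies the Markov-type lower bound. -/
theorem selected_model_coverage_bound
    {Ω : Type*} [mΩ : MeasurableSpace Ω] (P : Measure Ω) [IsProbabilityMeasure P]
    (G : MeasurableSpace Ω) (hG : G ≤ mΩ)
    (n : ℕ) (hn : 1 ≤ n) (α : ℝ) (hα : α ∈ Set.Ioo (0 : ℝ) 1)
    (l : ℕ) (hl : l = ⌊α * ((n : ℝ) + 1)⌋₊) (hl1 : 1 ≤ l) (hln : l ≤ n)
    (T : ℕ) (hT : 0 < T)
    (A : Fin T → Set Ω) (hA : ∀ t, MeasurableSet[mΩ] (A t))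
    (hbeta : ∀ t,
      @Measure.map Ω ℝ mΩ _
          (MeasureTheory.condExp G P ((A t).indicator fun _ => (1 : ℝ))) P =
        betaMeasure ((n : ℝ) + 1 - l) l)
    (τ : Ω → Fin T) (hτ : Measurable[G] τ)
    (b : ℝ) (hb : 1 < b) (hbT : 1 / (b * T) < 1) :
    ENNReal.ofReal (betaInvCDF ((n : ℝ) + 1 - l) l (1 / (b * T)) * (1 - 1 / b)) ≤
      P {ω | ω ∈ A (τ ω)} :=
  selected_model_coverage_bound_general (mΩ := mΩ) P G hG n l T A hA hbeta τ hτ b hb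

end
end

section
/- (Step-function structure of the lower envelope of equal-curvature parabolas.) Let T ≥ 1 and, for each t ∈ {1, …, T}, let a_t, c_t ∈ ℝ and define f_t : ℝ → ℝ by f_t(y) = c_t + (y − a_t)². Then there exist an integer L with 1 ≤ L ≤ T, knots −∞ = k_0 < k_1 < … < k_{L−1} < k_L = +∞, and indices m_1, …, m_L ∈ {1, …, T} such that for every l ∈ {1, …, L} and every y in the interval (k_{l−1}, k_l), f_{m_l}(y) = min_{1 ≤ s ≤ T} f_s(y). In other words, there is a selection of the pointwise argmin of the family {f_t} that is constant on each of at most T intervals partitioning ℝ. -/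
/-!
Up to the common term `y²`, each parabola `c_t + (y - a_t)²` is the line `c_t + a_t² - 2 a_t y`,
so comparing a minimizer at `y₁ < y₂` with one at `y₂` shows that the vertex `a_{m(y)}` of any
selected minimizer `m(y)` is monotone in `y`. A monotone function with at most `T` values is a
step function with at most `T` steps: the knots are the left endpoints of its level sets.
On a step the selected vertex is constant, and two minimizers with the same vertex are the same
parabola, so the minimizer chosen at one point of a step is a minimizer on the whole step.
-/

open Finset

namespace Finset

variable {α : Type*} [LinearOrder α]

theorem notMem_Ioo_orderEmbOfFin_castSucc_succ (s : Finset α) {L : ℕ} (h : s.card = L + 1)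
    (l : Fin L) {x : α} (hx : x ∈ s) :
    x ∉ Set.Ioo (s.orderEmbOfFin h l.castSucc) (s.orderEmbOfFin h l.succ) := by
  rintro ⟨hlo, hhi⟩
  obtain ⟨j, rfl⟩ : x ∈ Set.range (s.orderEmbOfFin h) := by
    rwa [range_orderEmbOfFin]
  rw [OrderEmbedding.lt_iff_lt, Fin.lt_def] at hlo hhi
  simp only [Fin.val_castSucc, Fin.val_succ] at hlo hhi
  omega

end Finset

section LevelSets

variable {α : Type*}

noncomputable def levelSetInf (g : ℝ → α) (v : α) : EReal :=
  ⨅ y ∈ g ⁻¹' {v}, (y : EReal)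

theorem levelSetInf_le (g : ℝ → α) (y : ℝ) : levelSetInf g (g y) ≤ y :=
  biInf_le (fun y : ℝ => (y : EReal)) rfl

theorem le_levelSetInf [Preorder α] {g : ℝ → α} (hg : Monotone g) {y : ℝ} {v : α} (hv : g y < v) :
    (y : EReal) ≤ levelSetInf g v :=
  le_iInf₂ fun w (hw : g w = v) =>
    EReal.coe_le_coe_iff.2 (le_of_not_gt fun hwy => (hw ▸ hv).not_ge (hg hwy.le))

theorem Monotone.exists_knots_constant_on_Ioo [LinearOrder α] {g : ℝ → α} (hg : Monotone g) (s : Finset α)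
    (hs : ∀ y, g y ∈ s) :
    ∃ L, 1 ≤ L ∧ L ≤ s.card ∧ ∃ k : Fin (L + 1) → EReal,
      StrictMono k ∧ k 0 = ⊥ ∧ k (Fin.last L) = ⊤ ∧
      ∀ (l : Fin L) (y z : ℝ), (y : EReal) ∈ Set.Ioo (k l.castSucc) (k l.succ) →
        (z : EReal) ∈ Set.Ioo (k l.castSucc) (k l.succ) → g y = g z := by
  classical
  set K : Finset EReal := insert ⊤ (s.image (levelSetInf g))
  have hK : K.Nonempty := insert_nonempty _ _
  have hmem : ∀ y : ℝ, levelSetInf g (g y) ∈ K := fun y =>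
    mem_insert_of_mem (mem_image_of_mem _ (hs y))
  have hmin : K.min' hK = ⊥ := (EReal.eq_bot_iff_forall_lt _).2 fun y =>
    calc K.min' hK ≤ levelSetInf g (g (y - 1)) := min'_le _ _ (hmem _)
      _ ≤ ((y - 1 : ℝ) : EReal) := levelSetInf_le g _
      _ < y := EReal.coe_lt_coe_iff.2 (by linarith)
  have hmax : K.max' hK = ⊤ := top_le_iff.1 (le_max' _ _ (mem_insert_self _ _))
  have hcard : 1 < K.card :=
    one_lt_card.2 ⟨⊥, hmin ▸ min'_mem _ _, ⊤, hmax ▸ max'_mem _ _, bot_ne_top⟩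
  obtain ⟨L, hL⟩ : ∃ L, K.card = L + 1 := ⟨K.card - 1, by omega⟩
  have hKs : K.card ≤ s.card + 1 := (card_insert_le _ _).trans (Nat.succ_le_succ card_image_le)
  refine ⟨L, by omega, by omega, K.orderEmbOfFin hL, (K.orderEmbOfFin hL).strictMono,
    by rw [← hmin, ← orderEmbOfFin_zero hL (Nat.succ_pos L)]; rfl,
    by rw [← hmax, ← orderEmbOfFin_last hL (Nat.succ_pos L)]; rfl, ?_⟩
  have key : ∀ (l : Fin L) (y z : ℝ), y ≤ z →
      (y : EReal) ∈ Set.Ioo (K.orderEmbOfFin hL l.castSucc) (K.orderEmbOfFin hL l.succ) →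
      (z : EReal) ∈ Set.Ioo (K.orderEmbOfFin hL l.castSucc) (K.orderEmbOfFin hL l.succ) →
      g y = g z := by
    intro l y z hyz hy hz
    by_contra hne
    -- otherwise the level set of `g z` would start at a knot inside `[y, z]`
    have hlt : g y < g z := (hg hyz).lt_of_ne hne
    exact K.notMem_Ioo_orderEmbOfFin_castSucc_succ hL l (hmem z)
      ⟨hy.1.trans_le (le_levelSetInf hg hlt), (levelSetInf_le g z).trans_lt hz.2⟩
  intro l y z hy hz
  rcases le_total y z with hyz | hzy
  · exact key l y z hyz hy hz
  · exact (key l z y hzy hz hy).symm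

end LevelSets

section Parabolas

theorem vertex_le_of_parabola_le {a₁ c₁ a₂ c₂ y₁ y₂ : ℝ} (hy : y₁ < y₂)
    (h₁ : c₁ + (y₁ - a₁) ^ 2 ≤ c₂ + (y₁ - a₂) ^ 2)
    (h₂ : c₂ + (y₂ - a₂) ^ 2 ≤ c₁ + (y₂ - a₁) ^ 2) : a₁ ≤ a₂ := by
  -- adding `h₁` and `h₂` leaves `0 ≤ 2 (y₂ - y₁) (a₂ - a₁)`
  nlinarith

variable {ι : Type*} {a c : ι → ℝ} {m : ℝ → ι}

theorem monotone_vertex_of_isMinimizer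
    (hm : ∀ y u, c (m y) + (y - a (m y)) ^ 2 ≤ c u + (y - a u) ^ 2) :
    Monotone fun y => a (m y) :=
  monotone_iff_forall_lt.2 fun y z hyz => vertex_le_of_parabola_le hyz (hm y (m z)) (hm z (m y))

theorem parabola_eq_of_vertex_eq
    (hm : ∀ y u, c (m y) + (y - a (m y)) ^ 2 ≤ c u + (y - a u) ^ 2) {y z : ℝ}
    (h : a (m y) = a (m z)) (x : ℝ) :
    c (m y) + (x - a (m y)) ^ 2 = c (m z) + (x - a (m z)) ^ 2 := by
  have hyz := hm y (m z)
  have hzy := hm z (m y)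
  rw [h] at hyz hzy ⊢
  linarith

end Parabolas

/-- **step-function structure of the lower envelope of equal-curvature
parabolas.**  For the family `f_t(y) = c_t + (y − a_t)²`, there are `L ≤ T` intervals
with knots `−∞ = k₀ < k₁ < … < k_L = +∞` and indices `m_1, …, m_L` such that on the
`l`-th open interval the parabola `f_{m_l}` achieves the lower envelope. -/
theorem lower_envelope_parabolas_step_function
    (T : ℕ) (hT : 1 ≤ T) (a c : Fin T → ℝ) :
    ∃ (L : ℕ) (_ : 1 ≤ L ∧ L ≤ T) (k : Fin (L + 1) → EReal) (m : Fin L → Fin T),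
      StrictMono k ∧ k 0 = ⊥ ∧ k (Fin.last L) = ⊤ ∧
      ∀ (l : Fin L) (y : ℝ), k l.castSucc < (y : EReal) → (y : EReal) < k l.succ →
        c (m l) + (y - a (m l)) ^ 2 = ⨅ u : Fin T, (c u + (y - a u) ^ 2) := by
  have : NeZero T := ⟨by omega⟩
  choose sel hsel using fun y : ℝ => Finite.exists_min fun u : Fin T => c u + (y - a u) ^ 2
  obtain ⟨L, hL1, hLs, k, hk, hk0, hkL, hconst⟩ :=
    (monotone_vertex_of_isMinimizer hsel).exists_knots_constant_on_Ioo (univ.image a)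
      fun y => mem_image_of_mem a (mem_univ _)
  choose pt hpt using fun l : Fin L => EReal.exists_between_coe_real (hk l.castSucc_lt_succ)
  refine ⟨L, ⟨hL1, hLs.trans (card_image_le.trans_eq (card_fin T))⟩, k, fun l => sel (pt l),
    hk, hk0, hkL, fun l y hy₁ hy₂ => ?_⟩
  rw [parabola_eq_of_vertex_eq hsel (hconst l (pt l) y (hpt l) ⟨hy₁, hy₂⟩) y]
  exact le_antisymm (le_ciInf (hsel y)) (ciInf_le (Finite.bddBelow_range _) _)
end
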